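/- Let 0 → A → B → C → 0, with maps f : A → B and g : B → C, be an almost split conflation in C. Let p : P → C be a projective cover in C, i.e., a deflation of C with P C-projective such that every endomorphism φ : P → P with p ∘ φ = p is an automorphism, and let p′ : P → B be any map with g ∘ p′ = p (such p′ exists because g is right almost split and p is not a split epimorphism). Then the sequence 0 → (𝟙_A : A → A) → ((f,p′) : A ⊕ P → B) → (p : P → C) → 0 in the epimorphism category F(C), whose first map is the arrow morphism ((1,0)ᵗ, f) and whose second map is the arrow morphism ([0,1], g), is an almost split conflation in F(C). -/

import Mathlib

open CategoryTheory CategoryTheory.Limits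

universe u

section Defs
variable {Λ : Type u} [Ring Λ]

/-- A short exact sequence `0 → X → Y → Z → 0` of Λ-modules. -/
def ShortExactSeq {X Y Z : ModuleCat.{u} Λ} (f : X ⟶ Y) (g : Y ⟶ Z) : Prop :=
  Function.Injective f ∧ Function.Surjective g ∧ Function.Exact f g

variable (C : Set (ModuleCat.{u} Λ))

/-- An inflation of the exact category `C`: an injective map between objects of `C`
whose cokernel lies in `C`. -/
def IsInflation {X Y : ModuleCat.{u} Λ} (f : X ⟶ Y) : Prop :=
  X ∈ C ∧ Y ∈ C ∧ Function.Injective f ∧ ∃ Z ∈ C, ∃ g : Y ⟶ Z, ShortExactSeq f g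

/-- A deflation of the exact category `C`: a surjective map between objects of `C`
whose kernel lies in `C`. -/
def IsDeflation {X Y : ModuleCat.{u} Λ} (f : X ⟶ Y) : Prop :=
  X ∈ C ∧ Y ∈ C ∧ Function.Surjective f ∧ ∃ Z ∈ C, ∃ g : Z ⟶ X, ShortExactSeq g f

/-- The monomorphism category `S(C)`, as a subcategory of the arrow category. -/
def SMono : Set (Arrow (ModuleCat.{u} Λ)) := {a | IsInflation C a.hom}

/-- The epimorphism category `F(C)`, as a subcategory of the arrow category. -/
def FEpi : Set (Arrow (ModuleCat.{u} Λ)) := {a | IsDeflation C a.hom}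

/-- `I` is a `C`-injective object. -/
def CInjective (I : ModuleCat.{u} Λ) : Prop :=
  I ∈ C ∧ ∀ (U V : ModuleCat.{u} Λ), U ∈ C → V ∈ C →
    ∀ (f : I ⟶ U) (g : U ⟶ V), ShortExactSeq f g → ∃ r : U ⟶ I, f ≫ r = 𝟙 I

/-- `P` is a `C`-projective object. -/
def CProjective (P : ModuleCat.{u} Λ) : Prop :=
  P ∈ C ∧ ∀ (U V : ModuleCat.{u} Λ), U ∈ C → V ∈ C →
    ∀ (f : U ⟶ V) (g : V ⟶ P), ShortExactSeq f g → ∃ s : P ⟶ V, s ≫ g = 𝟙 P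

/-- `C` has enough `C`-injectives. -/
def EnoughCInjectives : Prop :=
  ∀ X ∈ C, ∃ (I X' : ModuleCat.{u} Λ), CInjective C I ∧ X' ∈ C ∧
    ∃ (e : X ⟶ I) (q : I ⟶ X'), ShortExactSeq e q

/-- `C` has enough `C`-projectives. -/
def EnoughCProjectives : Prop :=
  ∀ X ∈ C, ∃ (P X' : ModuleCat.{u} Λ), CProjective C P ∧ X' ∈ C ∧
    ∃ (q : X' ⟶ P) (p : P ⟶ X), ShortExactSeq q p

def ClosedUnderIso : Prop := ∀ (M N : ModuleCat.{u} Λ), (M ≅ N) → M ∈ C → N ∈ C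
def ContainsZero : Prop := ∀ M : ModuleCat.{u} Λ, Subsingleton M → M ∈ C
def ClosedUnderSums : Prop := ∀ M N : ModuleCat.{u} Λ, M ∈ C → N ∈ C → (M ⊞ N) ∈ C
def ClosedUnderExtensions : Prop :=
  ∀ (X Y Z : ModuleCat.{u} Λ) (f : X ⟶ Y) (g : Y ⟶ Z),
    X ∈ C → Z ∈ C → ShortExactSeq f g → Y ∈ C

end Defs

section Approx
variable {A : Type*} [Category A] (D : Set A)

/-- `g : Y ⟶ Z` is a right `D`-approximation of `Z`. -/
def IsRightApprox {Y Z : A} (g : Y ⟶ Z) : Prop :=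
  Y ∈ D ∧ ∀ W ∈ D, ∀ u : W ⟶ Z, ∃ v : W ⟶ Y, v ≫ g = u

/-- `g : Z ⟶ Y` is a left `D`-approximation of `Z`. -/
def IsLeftApprox {Z Y : A} (g : Z ⟶ Y) : Prop :=
  Y ∈ D ∧ ∀ W ∈ D, ∀ u : Z ⟶ W, ∃ v : Y ⟶ W, g ≫ v = u

end Approx

section Finiteness
variable {Λ : Type u} [Ring Λ]

/-- Contravariant finiteness of `C` in `mod Λ` (the finite-dimensional Λ-modules). -/
def ContravariantlyFinite (C : Set (ModuleCat.{u} Λ)) : Prop :=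
  ∀ M : ModuleCat.{u} Λ, Module.Finite Λ M →
    ∃ (Y : ModuleCat.{u} Λ) (g : Y ⟶ M), IsRightApprox C g

/-- Covariant finiteness of `C` in `mod Λ`. -/
def CovariantlyFinite (C : Set (ModuleCat.{u} Λ)) : Prop :=
  ∀ M : ModuleCat.{u} Λ, Module.Finite Λ M →
    ∃ (Y : ModuleCat.{u} Λ) (g : M ⟶ Y), IsLeftApprox C g

end Finiteness

section ArrowAS
variable {Λ : Type u} [Ring Λ]
variable (D : Set (Arrow (ModuleCat.{u} Λ)))

/-- A conflation of the full subcategory `D` of the arrow category. -/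
def ArrowConflation {a b c : Arrow (ModuleCat.{u} Λ)} (φ : a ⟶ b) (ψ : b ⟶ c) : Prop :=
  a ∈ D ∧ b ∈ D ∧ c ∈ D ∧ ShortExactSeq φ.left ψ.left ∧ ShortExactSeq φ.right ψ.right

/-- `φ : a ⟶ b` is left almost split in `D`. -/
def ArrowLeftAlmostSplit {a b : Arrow (ModuleCat.{u} Λ)} (φ : a ⟶ b) : Prop :=
  (¬ ∃ r : b ⟶ a, φ ≫ r = 𝟙 a) ∧
  ∀ b' ∈ D, ∀ u : a ⟶ b', (¬ ∃ r : b' ⟶ a, u ≫ r = 𝟙 a) → ∃ v : b ⟶ b', φ ≫ v = u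

/-- `ψ : b ⟶ c` is right almost split in `D`. -/
def ArrowRightAlmostSplit {b c : Arrow (ModuleCat.{u} Λ)} (ψ : b ⟶ c) : Prop :=
  (¬ ∃ s : c ⟶ b, s ≫ ψ = 𝟙 c) ∧
  ∀ b' ∈ D, ∀ u : b' ⟶ c, (¬ ∃ s : c ⟶ b', s ≫ u = 𝟙 c) → ∃ v : b' ⟶ b, v ≫ ψ = u

/-- An almost split conflation in `D`. -/
def ArrowAlmostSplitConflation {a b c : Arrow (ModuleCat.{u} Λ)} (φ : a ⟶ b) (ψ : b ⟶ c) :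
    Prop :=
  ArrowConflation D φ ψ ∧ (¬ ∃ r : b ⟶ a, φ ≫ r = 𝟙 a) ∧
    ArrowLeftAlmostSplit D φ ∧ ArrowRightAlmostSplit D ψ

end ArrowAS

section ModAS
variable {Λ : Type u} [Ring Λ] (C : Set (ModuleCat.{u} Λ))

/-- `f : X ⟶ Y` is left almost split in `C`. -/
def ModLeftAlmostSplit {X Y : ModuleCat.{u} Λ} (f : X ⟶ Y) : Prop :=
  (¬ ∃ r : Y ⟶ X, f ≫ r = 𝟙 X) ∧
  ∀ Y' ∈ C, ∀ u : X ⟶ Y', (¬ ∃ r : Y' ⟶ X, u ≫ r = 𝟙 X) → ∃ v : Y ⟶ Y', f ≫ v = u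

/-- `g : Y ⟶ Z` is right almost split in `C`. -/
def ModRightAlmostSplit {Y Z : ModuleCat.{u} Λ} (g : Y ⟶ Z) : Prop :=
  (¬ ∃ s : Z ⟶ Y, s ≫ g = 𝟙 Z) ∧
  ∀ Y' ∈ C, ∀ u : Y' ⟶ Z, (¬ ∃ s : Z ⟶ Y', s ≫ u = 𝟙 Z) → ∃ v : Y' ⟶ Y, v ≫ g = u

/-- An almost split conflation `0 → X → Y → Z → 0` in `C`. -/
def ModAlmostSplitSeq {X Y Z : ModuleCat.{u} Λ} (f : X ⟶ Y) (g : Y ⟶ Z) : Prop :=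
  X ∈ C ∧ Y ∈ C ∧ Z ∈ C ∧ ShortExactSeq f g ∧ (¬ ∃ r : Y ⟶ X, f ≫ r = 𝟙 X) ∧
    ModLeftAlmostSplit C f ∧ ModRightAlmostSplit C g

end ModAS

/-! Both component sequences are exact (the top one splits), and `(f, p′)` is a deflation whose
kernel is that of `p`, embedded by `z ↦ (t z, q z)` where `t ≫ f = -(q ≫ p′)`.

Left almost split: if `u : 𝟙_A → b'` is not a split monomorphism, neither is its bottom
component `u₂`, so `u₂ = f ≫ v`; the top component is `(u₁, w) : A ⊕ P → X'`, where `w` lifts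
`p′ ≫ v` along the deflation `b'` by `C`-projectivity of `P`.

Right almost split: if the bottom component `u₂` of `u : b' → p` had a section `s`, lifting
`p ≫ s` along `b'` would give `w` with `(w ≫ u₁) ≫ p = p`; then `w ≫ u₁` is invertible since `p`
is a cover, and `u` would split. Hence `u₂ = v ≫ g`, and `b' ≫ v - u₁ ≫ p′` is killed by `g`, so
it equals `t ≫ f`; the factorization is `((t, u₁), v)`. -/

section ShortExactSeq
variable {Λ : Type u} [Ring Λ] {X Y Z : ModuleCat.{u} Λ} {f : X ⟶ Y} {g : Y ⟶ Z}

lemma ShortExactSeq.comp_eq_zero (h : ShortExactSeq f g) : f ≫ g = 0 := by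
  ext x
  exact h.2.2.apply_apply_eq_zero x

lemma ShortExactSeq.shortExact (h : ShortExactSeq f g) :
    (ShortComplex.mk f g h.comp_eq_zero).ShortExact where
  exact := (ShortComplex.ShortExact.moduleCat_exact_iff_function_exact _).2 h.2.2
  mono_f := (ModuleCat.mono_iff_injective f).2 h.1
  epi_g := (ModuleCat.epi_iff_surjective g).2 h.2.1

lemma CategoryTheory.ShortComplex.ShortExact.shortExactSeq {S : ShortComplex (ModuleCat.{u} Λ)}
    (hS : S.ShortExact) : ShortExactSeq S.f S.g :=
  ⟨hS.moduleCat_injective_f, hS.moduleCat_surjective_g,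
    (ShortComplex.ShortExact.moduleCat_exact_iff_function_exact S).1 hS.exact⟩

lemma ShortExactSeq.exists_lift (h : ShortExactSeq f g) {W : ModuleCat.{u} Λ} (k : W ⟶ Y)
    (hk : k ≫ g = 0) : ∃ t : W ⟶ X, t ≫ f = k :=
  have := h.shortExact.mono_f
  ⟨h.shortExact.exact.lift k hk, h.shortExact.exact.lift_f k hk⟩

lemma shortExactSeq_biprod_inl_snd (A P : ModuleCat.{u} Λ) :
    ShortExactSeq (biprod.inl : A ⟶ A ⊞ P) biprod.snd :=
  (ShortComplex.Splitting.ofHasBinaryBiproduct A P).shortExact.shortExactSeq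

lemma shortExactSeq_zero_id (X : ModuleCat.{u} Λ) :
    ShortExactSeq (0 : ModuleCat.of Λ PUnit ⟶ X) (𝟙 X) :=
  (ShortComplex.Splitting.ofIsZeroOfIsIso
    (ShortComplex.mk (0 : ModuleCat.of Λ PUnit ⟶ X) (𝟙 X) zero_comp)
    (ModuleCat.isZero_of_subsingleton _) inferInstance).shortExact.shortExactSeq

end ShortExactSeq

section Biprod
variable {Λ : Type u} [Ring Λ] {A P B : ModuleCat.{u} Λ}

lemma biprod_desc_apply (f : A ⟶ B) (p' : P ⟶ B) (y : ↑(A ⊞ P)) :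
    biprod.desc f p' y = f ((biprod.fst : A ⊞ P ⟶ A) y) + p' ((biprod.snd : A ⊞ P ⟶ P) y) := by
  simp [biprod.desc_eq]

lemma biprod_ext_apply {y y' : ↑(A ⊞ P)}
    (h₁ : (biprod.fst : A ⊞ P ⟶ A) y = (biprod.fst : A ⊞ P ⟶ A) y')
    (h₂ : (biprod.snd : A ⊞ P ⟶ P) y = (biprod.snd : A ⊞ P ⟶ P) y') : y = y' := by
  have total (y : ↑(A ⊞ P)) : (biprod.inl : A ⟶ A ⊞ P) ((biprod.fst : A ⊞ P ⟶ A) y)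
      + (biprod.inr : P ⟶ A ⊞ P) ((biprod.snd : A ⊞ P ⟶ P) y) = y :=
    congr(($(biprod.total (X := A) (Y := P))).hom y)
  rw [← total y, ← total y', h₁, h₂]

end Biprod

section Deflations
variable {Λ : Type u} [Ring Λ] {C : Set (ModuleCat.{u} Λ)}

lemma exists_shortExactSeq_biprod_desc {A B Z P K : ModuleCat.{u} Λ} {f : A ⟶ B} {g : B ⟶ Z}
    (hfg : ShortExactSeq f g) {p : P ⟶ Z} {q : K ⟶ P} (hqp : ShortExactSeq q p) {p' : P ⟶ B}
    (hp' : p' ≫ g = p) : ∃ j : K ⟶ A ⊞ P, ShortExactSeq j (biprod.desc f p') := by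
  obtain ⟨t, ht⟩ := hfg.exists_lift (-(q ≫ p')) (by simp [hp', hqp.comp_eq_zero])
  have hg (x : P) : g (p' x) = p x := congr($hp' x)
  have ht' (z : K) : f (t z) = -p' (q z) := congr($ht z)
  have hj : biprod.lift t q ≫ biprod.desc f p' = 0 := by simp [ht]
  refine ⟨biprod.lift t q, fun z₁ z₂ hz => hqp.1 ?_, fun b => ?_, fun y => ⟨fun hy => ?_, ?_⟩⟩
  · simpa only [← ConcreteCategory.comp_apply, biprod.lift_snd]
      using congr((biprod.snd : A ⊞ P ⟶ P) $hz)
  · obtain ⟨x, hx⟩ := hqp.2.1 (g b)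
    obtain ⟨a, ha⟩ := (hfg.2.2 (b - p' x)).1 (by simp [hg, hx])
    refine ⟨(biprod.inl : A ⟶ A ⊞ P) a + (biprod.inr : P ⟶ A ⊞ P) x, ?_⟩
    simp only [map_add, ← ConcreteCategory.comp_apply, biprod.inl_desc, biprod.inr_desc, ha,
      sub_add_cancel]
  · rw [biprod_desc_apply] at hy
    obtain ⟨z, hz⟩ := (hqp.2.2 _).1
      (by simpa [hg, hfg.2.2.apply_apply_eq_zero] using congr(g $hy))
    have hfst : (biprod.fst : A ⊞ P ⟶ A) (biprod.lift t q z) = t z := by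
      simp only [← ConcreteCategory.comp_apply, biprod.lift_fst]
    have hsnd : (biprod.snd : A ⊞ P ⟶ P) (biprod.lift t q z) = q z := by
      simp only [← ConcreteCategory.comp_apply, biprod.lift_snd]
    refine ⟨z, biprod_ext_apply (hfg.1 ?_) (hsnd.trans hz)⟩
    rw [hfst, ht', hz, eq_neg_of_add_eq_zero_left hy]
  · rintro ⟨z, rfl⟩
    exact congr($hj z)

lemma exists_shortExactSeq_pullback {K X Y P : ModuleCat.{u} Λ} {j : K ⟶ X} {d : X ⟶ Y}
    (hjd : ShortExactSeq j d) (t : P ⟶ Y) :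
    ∃ (Q : ModuleCat.{u} Λ) (ι : K ⟶ Q) (π : Q ⟶ P) (ρ : Q ⟶ X),
      ShortExactSeq ι π ∧ ρ ≫ d = π ≫ t := by
  let Q := LinearMap.eqLocus (d.hom ∘ₗ LinearMap.fst Λ X P) (t.hom ∘ₗ LinearMap.snd Λ X P)
  have hQ (x : X) (m : P) : (x, m) ∈ Q ↔ d x = t m := LinearMap.mem_eqLocus
  have hjQ (k : K) : (j k, 0) ∈ Q := (hQ _ _).2 (by simp [hjd.2.2.apply_apply_eq_zero])
  refine ⟨ModuleCat.of Λ Q, ModuleCat.ofHom ((LinearMap.inl Λ X P ∘ₗ j.hom).codRestrict Q hjQ),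
    ModuleCat.ofHom (LinearMap.snd Λ X P ∘ₗ Q.subtype),
    ModuleCat.ofHom (LinearMap.fst Λ X P ∘ₗ Q.subtype),
    ⟨fun k₁ k₂ hk => hjd.1 congr(($hk).1.1), fun m => ?_, ?_⟩, ?_⟩
  · obtain ⟨x, hx⟩ := hjd.2.1 (t m)
    exact ⟨⟨(x, m), (hQ x m).2 hx⟩, rfl⟩
  · rintro ⟨⟨x, m⟩, hxm⟩
    refine ⟨fun (hm : m = 0) => ?_, fun ⟨k, hk⟩ => congr(($hk.symm).1.2)⟩
    obtain ⟨k, rfl⟩ := (hjd.2.2 x).1 (by rw [(hQ x m).1 hxm, hm, map_zero])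
    exact ⟨k, Subtype.ext (Prod.ext rfl hm.symm)⟩
  · ext ⟨⟨x, m⟩, hxm⟩
    exact (hQ x m).1 hxm

/-- `C`-projectivity only splits conflations ending in `P`; to lift along a deflation, split the
pulled-back conflation `K → X ×_Y P → P`, which lies in `C` as an extension of `P` by `K`. -/
lemma CProjective.exists_lift (hCext : ClosedUnderExtensions C) {P : ModuleCat.{u} Λ}
    (hP : CProjective C P) {X Y : ModuleCat.{u} Λ} {d : X ⟶ Y} (hd : IsDeflation C d)
    (t : P ⟶ Y) : ∃ w : P ⟶ X, w ≫ d = t := by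
  obtain ⟨-, -, -, K, hK, j, hjd⟩ := hd
  obtain ⟨Q, ι, π, ρ, hιπ, hρ⟩ := exists_shortExactSeq_pullback hjd t
  obtain ⟨s, hs⟩ := hP.2 K Q hK (hCext K Q P ι π hK hP.1 hιπ) ι π hιπ
  exact ⟨s ≫ ρ, by rw [Category.assoc, hρ, ← Category.assoc, hs, Category.id_comp]⟩

lemma CategoryTheory.Arrow.mk_id_mem_fEpi (hC0 : ContainsZero C) {A : ModuleCat.{u} Λ}
    (hA : A ∈ C) : Arrow.mk (𝟙 A) ∈ FEpi C :=
  ⟨hA, hA, Function.surjective_id, ModuleCat.of Λ PUnit, hC0 _ inferInstance, 0,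
    shortExactSeq_zero_id A⟩

lemma CategoryTheory.Arrow.mk_biprod_desc_mem_fEpi (hCsum : ClosedUnderSums C)
    {A B Z P : ModuleCat.{u} Λ} (hA : A ∈ C) (hB : B ∈ C) {f : A ⟶ B} {g : B ⟶ Z}
    (hfg : ShortExactSeq f g) {p : P ⟶ Z} (hp : IsDeflation C p) {p' : P ⟶ B} (hp' : p' ≫ g = p) :
    Arrow.mk (biprod.desc f p') ∈ FEpi C := by
  obtain ⟨hP, -, -, K, hK, q, hqp⟩ := hp
  obtain ⟨j, hj⟩ := exists_shortExactSeq_biprod_desc hfg hqp hp'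
  exact ⟨hCsum A P hA hP, hB, hj.2.1, K, hK, j, hj⟩

end Deflations

namespace CategoryTheory.Arrow
variable {𝒞 : Type*} [Category 𝒞]

lemma not_exists_retraction_of_right {a b : Arrow 𝒞} (φ : a ⟶ b)
    (h : ¬ ∃ r : b.right ⟶ a.right, φ.right ≫ r = 𝟙 _) : ¬ ∃ r : b ⟶ a, φ ≫ r = 𝟙 a :=
  fun ⟨r, hr⟩ => h ⟨r.right, by simpa using congr_arg CommaMorphism.right hr⟩

lemma not_exists_section_of_right {b c : Arrow 𝒞} (ψ : b ⟶ c)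
    (h : ¬ ∃ s : c.right ⟶ b.right, s ≫ ψ.right = 𝟙 _) : ¬ ∃ s : c ⟶ b, s ≫ ψ = 𝟙 c :=
  fun ⟨s, hs⟩ => h ⟨s.right, by simpa using congr_arg CommaMorphism.right hs⟩

lemma exists_retraction_of_right {A : 𝒞} {b : Arrow 𝒞} (u : Arrow.mk (𝟙 A) ⟶ b)
    {r : b.right ⟶ A} (hr : u.right ≫ r = 𝟙 A) : ∃ ρ : b ⟶ Arrow.mk (𝟙 A), u ≫ ρ = 𝟙 _ := by
  refine ⟨Arrow.homMk (b.hom ≫ r) r (by simp), Arrow.hom_ext _ _ ?_ hr⟩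
  simp [hr]

lemma exists_section_of_right {P Z : 𝒞} {p : P ⟶ Z}
    (hcover : ∀ φ : P ⟶ P, φ ≫ p = p → IsIso φ) {b : Arrow 𝒞} (u : b ⟶ Arrow.mk p)
    {s : Z ⟶ b.right} (hs : s ≫ u.right = 𝟙 Z) {w : P ⟶ b.left} (hw : w ≫ b.hom = p ≫ s) :
    ∃ σ : Arrow.mk p ⟶ b, σ ≫ u = 𝟙 _ := by
  have hu : u.left ≫ p = b.hom ≫ u.right := u.w
  have hφ : (w ≫ u.left) ≫ p = p := by
    rw [Category.assoc, hu, ← Category.assoc, hw, Category.assoc, hs, Category.comp_id]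
  have := hcover _ hφ
  have hinv : inv (w ≫ u.left) ≫ p = p := by rw [IsIso.inv_comp_eq, hφ]
  refine ⟨Arrow.homMk (inv (w ≫ u.left) ≫ w) s ?_, Arrow.hom_ext _ _ ?_ hs⟩
  · rw [Category.assoc, hw, ← Category.assoc, hinv]
    rfl
  · simp

end CategoryTheory.Arrow

section AlmostSplit
variable {Λ : Type u} [Ring Λ] {C : Set (ModuleCat.{u} Λ)} {A B Z P : ModuleCat.{u} Λ}

lemma arrowLeftAlmostSplit_homMk_inl (hCext : ClosedUnderExtensions C) (hP : CProjective C P)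
    {f : A ⟶ B} (hf : ModLeftAlmostSplit C f) (p' : P ⟶ B) :
    ArrowLeftAlmostSplit (FEpi C) (Arrow.homMk (u := biprod.inl) (v := f) (by simp) :
      Arrow.mk (𝟙 A) ⟶ Arrow.mk (biprod.desc f p')) := by
  refine ⟨Arrow.not_exists_retraction_of_right _ hf.1, fun b hb u hu => ?_⟩
  obtain ⟨v, hv⟩ := hf.2 b.right hb.2.1 u.right
    fun ⟨r, hr⟩ => hu (Arrow.exists_retraction_of_right u hr)
  obtain ⟨w, hw⟩ := hP.exists_lift hCext hb (p' ≫ v)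
  refine ⟨Arrow.homMk (biprod.desc u.left w) v ?_, Arrow.hom_ext _ _ (biprod.inl_desc _ _) hv⟩
  apply biprod.hom_ext' <;> simp [hv, hw]

lemma arrowRightAlmostSplit_homMk_snd (hCext : ClosedUnderExtensions C) (hP : CProjective C P)
    {p : P ⟶ Z} (hcover : ∀ φ : P ⟶ P, φ ≫ p = p → IsIso φ) {f : A ⟶ B} {g : B ⟶ Z}
    (hfg : ShortExactSeq f g) (hg : ModRightAlmostSplit C g) {p' : P ⟶ B} (hp' : p' ≫ g = p) :
    ArrowRightAlmostSplit (FEpi C)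
      (Arrow.homMk (u := biprod.snd) (v := g)
        (by apply biprod.hom_ext' <;> simp [hfg.comp_eq_zero, hp']) :
        Arrow.mk (biprod.desc f p') ⟶ Arrow.mk p) := by
  refine ⟨Arrow.not_exists_section_of_right _ hg.1, fun b hb u hu => ?_⟩
  have hu' : u.left ≫ p = b.hom ≫ u.right := u.w
  obtain ⟨v, hv⟩ := hg.2 b.right hb.2.1 u.right fun ⟨s, hs⟩ => by
    obtain ⟨w, hw⟩ := hP.exists_lift hCext hb (p ≫ s)
    exact hu (Arrow.exists_section_of_right hcover u hs hw)
  obtain ⟨t, ht⟩ := hfg.exists_lift (b.hom ≫ v - u.left ≫ p') (by simp [hv, hp', hu'])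
  refine ⟨Arrow.homMk (biprod.lift t u.left) v ?_, Arrow.hom_ext _ _ (biprod.lift_snd _ _) hv⟩
  simp [ht]

end AlmostSplit

/-- **Statement 17.** If `0 → A →f B →g Z → 0` is an almost split conflation in `C`,
`p : P → Z` is a projective cover in `C` and `p′ : P → B` lifts `p` through `g`, then
`0 → (𝟙_A) → ((f,p′) : A ⊕ P → B) → (p : P → Z) → 0` is an almost split conflation
in `F(C)`. -/
theorem almost_split_fepi_ending_at_projective_cover
    (Λ : Type u) [Ring Λ]
    (C : Set (ModuleCat.{u} Λ))
    (hC0 : ContainsZero C)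
    (hCsum : ClosedUnderSums C) (hCext : ClosedUnderExtensions C)
    {A B Z P : ModuleCat.{u} Λ} (f : A ⟶ B) (g : B ⟶ Z)
    (h : ModAlmostSplitSeq C f g)
    (p : P ⟶ Z) (hdefl : IsDeflation C p) (hP : CProjective C P)
    (hcover : ∀ φ : P ⟶ P, φ ≫ p = p → IsIso φ)
    (p' : P ⟶ B) (hp' : p' ≫ g = p) :
    ArrowAlmostSplitConflation (FEpi C)
      (a := Arrow.mk (𝟙 A))
      (b := Arrow.mk (biprod.desc f p'))
      (c := Arrow.mk p)
      (Arrow.homMk (u := biprod.inl) (v := f) (by simp))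
      (Arrow.homMk (u := biprod.snd) (v := g)
        (by
          have hex : Function.Exact f g := h.2.2.2.1.2.2
          have hfg : f ≫ g = 0 := by
            ext x
            simpa using hex.apply_apply_eq_zero x
          apply biprod.hom_ext'
          · simp [hfg]
          · simp [hp'])) := by
  obtain ⟨hA, hB, -, hfg, -, hf, hg⟩ := h
  have hleft := arrowLeftAlmostSplit_homMk_inl hCext hP hf p'
  exact ⟨⟨Arrow.mk_id_mem_fEpi hC0 hA, Arrow.mk_biprod_desc_mem_fEpi hCsum hA hB hfg hdefl hp',
    hdefl, shortExactSeq_biprod_inl_snd A P, hfg⟩, hleft.1, hleft,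
    arrowRightAlmostSplit_homMk_snd hCext hP hcover hfg hg hp'⟩
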